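/- Define F̄_i on w⊥ (the 4-dimensional subspace of H^{n-1} with constant quaternionic Kähler angle (φ₁,φ₂,φ₃), φ₃ < π/2) by F̄_i ξ = F_i ξ / cos(φ_i), where F_i ξ is the orthogonal projection of J_i ξ onto w⊥. Then F̄_i F̄_{i+1} = F̄_{i+2} = -F̄_{i+1} F̄_i and F̄_i² = -id on w⊥, i.e., {F̄₁, F̄₂, F̄₃} is a quaternionic structure on w⊥. -/

import Mathlib

/-!
Put `u₀ = e₀` and `uₖ = cos φₖ e₀ + sin φₖ eₖ`, so that `ξ_a = J_a u_a` with `J₀ = id`. The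
`u_a` lie in the totally real space `U = span{e₀, e₁, e₂, e₃}`, hence `U, J₁U, J₂U, J₃U` are
mutually orthogonal, `ξ` is orthonormal, and `J_i` permutes these four blocks (up to sign) as left
multiplication by the `i`-th imaginary unit permutes `1, i, j, k`. So the projection of `J_i ξ_a`
onto `w⊥` is `±⟪u_b, u_a⟫ ξ_b` for a single `b`, and that inner product is `cos φ_i`: directly for
`{a, b} = {0, i}`, and by the prescribed value of `⟪e_{i+1}, e_{i+2}⟫` for `{a, b} = {i+1, i+2}`.
Thus `F̄_i` acts on the basis `ξ` exactly as the `i`-th imaginary unit acts on `1, i, j, k`.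
-/

open RealInnerProductSpace Real

theorem fin_three_add_one_add_one (i : Fin 3) : i + 1 + 1 = i + 2 := by decide +revert

theorem fin_three_add_one_add_two (i : Fin 3) : i + 1 + 2 = i := by decide +revert

theorem fin_three_add_two_add_one (i : Fin 3) : i + 2 + 1 = i := by decide +revert

theorem fin_three_add_two_add_two (i : Fin 3) : i + 2 + 2 = i + 1 := by decide +revert

theorem starProjection_span_eq_smul_of_orthonormal {𝕜 E ι : Type*} [RCLike 𝕜]
    [NormedAddCommGroup E] [InnerProductSpace 𝕜 E] {ξ : ι → E} (hξ : Orthonormal 𝕜 ξ)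
    [(Submodule.span 𝕜 (Set.range ξ)).HasOrthogonalProjection] {v : E} {b : ι}
    (hv : ∀ l ≠ b, inner 𝕜 (ξ l) v = 0) :
    (Submodule.span 𝕜 (Set.range ξ)).starProjection v = inner 𝕜 (ξ b) v • ξ b := by
  refine Submodule.eq_starProjection_of_mem_orthogonal
    (Submodule.smul_mem _ _ (Submodule.subset_span ⟨b, rfl⟩)) ?_
  refine Submodule.isOrtho_span.2 ?_ (Submodule.mem_span_singleton_self _)
  rintro _ rfl _ ⟨l, rfl⟩
  rw [inner_sub_left, inner_smul_left, inner_conj_symm]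
  by_cases hl : l = b
  · subst hl; rw [inner_self_eq_one_of_norm_eq_one (hξ.1 l)]; simp
  · rw [hξ.2 (Ne.symm hl), inner_eq_zero_symm.1 (hv l hl)]; simp

theorem quaternion_relations_of_basis {R M : Type*} [Ring R] [AddCommGroup M] [Module R M]
    (L : Fin 3 → M →ₗ[R] M) (b : Fin 4 → M)
    (h0 : ∀ i, L i (b 0) = b i.succ) (hself : ∀ i, L i (b i.succ) = -b 0)
    (h1 : ∀ i, L i (b (i + 1).succ) = b (i + 2).succ)
    (h2 : ∀ i, L i (b (i + 2).succ) = -b (i + 1).succ) (i : Fin 3) {x : M}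
    (hx : x ∈ Submodule.span R (Set.range b)) :
    L i (L (i + 1) x) = L (i + 2) x ∧ L (i + 1) (L i x) = -L (i + 2) x ∧ L i (L i x) = -x := by
  have table := fun i => And.intro (h0 i) (And.intro (hself i) (And.intro (h1 i) (h2 i)))
  obtain ⟨_, _, _, _⟩ := table 0
  obtain ⟨_, _, _, _⟩ := table 1
  obtain ⟨_, _, _, _⟩ := table 2
  simp only [Fin.isValue, Fin.reduceAdd, Fin.succ_zero_eq_one, Fin.succ_one_eq_two] at *
  have on_basis : ∀ a, L i (L (i + 1) (b a)) = L (i + 2) (b a) ∧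
      L (i + 1) (L i (b a)) = -L (i + 2) (b a) ∧ L i (L i (b a)) = -b a := by
    intro a
    fin_cases i <;> fin_cases a <;> simp_all
  refine ⟨?_, ?_, ?_⟩
  · exact LinearMap.eqOn_span (f := L i ∘ₗ L (i + 1)) (g := L (i + 2))
      (by rintro _ ⟨a, rfl⟩; exact (on_basis a).1) hx
  · exact LinearMap.eqOn_span (f := L (i + 1) ∘ₗ L i) (g := -L (i + 2))
      (by rintro _ ⟨a, rfl⟩; exact (on_basis a).2.1) hx
  · exact LinearMap.eqOn_span (f := L i ∘ₗ L i) (g := -LinearMap.id)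
      (by rintro _ ⟨a, rfl⟩; exact (on_basis a).2.2) hx

section Quaternionic

variable {V : Type*} [NormedAddCommGroup V] [InnerProductSpace ℝ V]

structure IsQuaternionic (J : Fin 3 → V →ₗ[ℝ] V) : Prop where
  inner_map_map : ∀ i x y, ⟪J i x, J i y⟫ = ⟪x, y⟫
  map_map_self : ∀ i x, J i (J i x) = -x
  map_map_add_one : ∀ i x, J i (J (i + 1) x) = J (i + 2) x
  map_add_one_map : ∀ i x, J (i + 1) (J i x) = -J (i + 2) x

namespace IsQuaternionic

variable {J : Fin 3 → V →ₗ[ℝ] V}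

theorem inner_map_left (hJ : IsQuaternionic J) (i : Fin 3) (x y : V) :
    ⟪J i x, y⟫ = -⟪x, J i y⟫ := by
  rw [← hJ.inner_map_map i x (J i y), hJ.map_map_self, inner_neg_right, neg_neg]

theorem map_map_add_two (hJ : IsQuaternionic J) (i : Fin 3) (x : V) :
    J i (J (i + 2) x) = -J (i + 1) x := by
  simpa [fin_three_add_two_add_one, fin_three_add_two_add_two] using hJ.map_add_one_map (i + 2) x

end IsQuaternionic

def IsTotallyReal (J : Fin 3 → V →ₗ[ℝ] V) (U : Submodule ℝ V) : Prop :=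
  ∀ j, U.map (J j) ⟂ U

theorem isTotallyReal_span {J : Fin 3 → V →ₗ[ℝ] V} {s : Set V}
    (h : ∀ j, ∀ x ∈ s, ∀ y ∈ s, ⟪J j x, y⟫ = 0) : IsTotallyReal J (Submodule.span ℝ s) := by
  intro j
  rw [Submodule.map_span]
  exact Submodule.isOrtho_span.2 (by rintro _ ⟨x, hx, rfl⟩ y hy; exact h j x hx y hy)

def quatUnit (J : Fin 3 → V →ₗ[ℝ] V) : Fin 4 → V →ₗ[ℝ] V := Fin.cons LinearMap.id J

@[simp] theorem quatUnit_zero (J : Fin 3 → V →ₗ[ℝ] V) : quatUnit J 0 = LinearMap.id := rfl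

@[simp] theorem quatUnit_succ (J : Fin 3 → V →ₗ[ℝ] V) (k : Fin 3) : quatUnit J k.succ = J k := rfl

theorem inner_quatUnit_quatUnit {J : Fin 3 → V →ₗ[ℝ] V} {U : Submodule ℝ V}
    (hJ : IsQuaternionic J) (hU : IsTotallyReal J U) {x y : V} (hx : x ∈ U) (hy : y ∈ U)
    (a b : Fin 4) :
    ⟪quatUnit J a x, quatUnit J b y⟫ = if a = b then ⟪x, y⟫ else 0 := by
  have hJU : ∀ j {x y}, x ∈ U → y ∈ U → ⟪J j x, y⟫ = 0 := fun j x y hx hy =>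
    (hU j).inner_eq (Submodule.mem_map_of_mem hx) hy
  induction a using Fin.cases <;> induction b using Fin.cases
  · simp
  · simpa [(Fin.succ_ne_zero _).symm, real_inner_comm x] using hJU _ hy hx
  · simp [hJU _ hx hy]
  case succ.succ j k =>
    by_cases hjk : j = k
    · subst hjk; simp [hJ.inner_map_map]
    simp only [quatUnit_succ, Fin.succ_inj, hjk, if_false, hJ.inner_map_left]
    rcases (by decide : ∀ j k : Fin 3, j ≠ k → k = j + 1 ∨ k = j + 2) j k hjk with rfl | rfl
    · rw [hJ.map_map_add_one, real_inner_comm, hJU _ hy hx, neg_zero]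
    · rw [hJ.map_map_add_two, inner_neg_right, real_inner_comm, hJU _ hy hx, neg_zero, neg_zero]

section Frame

variable {J : Fin 3 → V →ₗ[ℝ] V} {U : Submodule ℝ V} {u : Fin 4 → V} {ξ : Fin 4 → V}

theorem orthonormal_of_eq_quatUnit (hJ : IsQuaternionic J) (hU : IsTotallyReal J U)
    (hu : ∀ a, u a ∈ U) (hu1 : ∀ a, ‖u a‖ = 1) (hξ : ∀ a, ξ a = quatUnit J a (u a)) :
    Orthonormal ℝ ξ := by
  refine orthonormal_iff_ite.2 fun a b => ?_
  rw [hξ, hξ, inner_quatUnit_quatUnit hJ hU (hu a) (hu b)]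
  split_ifs with h
  · rw [h, real_inner_self_eq_norm_sq, hu1, one_pow]
  · rfl

theorem starProjection_quatUnit (hJ : IsQuaternionic J) (hU : IsTotallyReal J U)
    (hu : ∀ a, u a ∈ U) (hu1 : ∀ a, ‖u a‖ = 1) (hξ : ∀ a, ξ a = quatUnit J a (u a))
    [(Submodule.span ℝ (Set.range ξ)).HasOrthogonalProjection] {y : V} (hy : y ∈ U) (b : Fin 4) :
    (Submodule.span ℝ (Set.range ξ)).starProjection (quatUnit J b y) = ⟪u b, y⟫ • ξ b := by
  rw [starProjection_span_eq_smul_of_orthonormal (orthonormal_of_eq_quatUnit hJ hU hu hu1 hξ)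
    (b := b), hξ, inner_quatUnit_quatUnit hJ hU (hu b) hy, if_pos rfl]
  intro l hl
  rw [hξ, inner_quatUnit_quatUnit hJ hU (hu l) hy, if_neg hl]

theorem quaternionic_relations_of_frame (hJ : IsQuaternionic J) (hU : IsTotallyReal J U)
    (hu : ∀ a, u a ∈ U) (hu1 : ∀ a, ‖u a‖ = 1) (hξ : ∀ a, ξ a = quatUnit J a (u a))
    (c : Fin 3 → ℝ) (hc : ∀ i, c i ≠ 0)
    (hc0 : ∀ i, ⟪u 0, u i.succ⟫ = c i) (hc1 : ∀ i, ⟪u (i + 1).succ, u (i + 2).succ⟫ = c i)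
    [(Submodule.span ℝ (Set.range ξ)).HasOrthogonalProjection] (F : Fin 3 → V → V)
    (hF : ∀ i x, F i x =
      (c i)⁻¹ • ((Submodule.span ℝ (Set.range ξ)).orthogonalProjectionOnto (J i x) : V))
    (i : Fin 3) {x : V} (hx : x ∈ Submodule.span ℝ (Set.range ξ)) :
    F i (F (i + 1) x) = F (i + 2) x ∧ F (i + 1) (F i x) = -F (i + 2) x ∧ F i (F i x) = -x := by
  let L : Fin 3 → V →ₗ[ℝ] V := fun i =>
    (c i)⁻¹ • ((Submodule.span ℝ (Set.range ξ)).starProjection.toLinearMap ∘ₗ J i)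
  obtain rfl : F = fun i => ⇑(L i) := funext fun i => funext (hF i)
  have entry : ∀ i a b (ε : ℝ), J i (quatUnit J a (u a)) = ε • quatUnit J b (u a) →
      ⟪u b, u a⟫ = c i → L i (ξ a) = ε • ξ b := by
    intro i a b ε hJab hab
    simp only [L, LinearMap.smul_apply, LinearMap.comp_apply, ContinuousLinearMap.coe_coe, hξ a,
      hJab, map_smul, starProjection_quatUnit hJ hU hu hu1 hξ (hu a), hab, smul_smul]
    rw [mul_left_comm, inv_mul_cancel₀ (hc i), mul_one]
  refine quaternion_relations_of_basis L ξ (fun i => ?_) (fun i => ?_) (fun i => ?_)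
    (fun i => ?_) i hx
  · simpa using entry i 0 i.succ 1 (by simp) (by rw [real_inner_comm, hc0])
  · simpa using entry i i.succ 0 (-1) (by simp [hJ.map_map_self]) (hc0 i)
  · simpa using entry i (i + 1).succ (i + 2).succ 1 (by simp [hJ.map_map_add_one])
      (by rw [real_inner_comm, hc1])
  · simpa using entry i (i + 2).succ (i + 1).succ (-1) (by simp [hJ.map_map_add_two]) (hc1 i)

end Frame

noncomputable def tiltedFrame (e₀ : V) (e : Fin 3 → V) (φ : Fin 3 → ℝ) : Fin 4 → V :=
  Fin.cons e₀ fun k => cos (φ k) • e₀ + sin (φ k) • e k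

section TiltedFrame

variable {e₀ : V} {e : Fin 3 → V} (φ : Fin 3 → ℝ)

@[simp] theorem tiltedFrame_zero : tiltedFrame e₀ e φ 0 = e₀ := rfl

@[simp] theorem tiltedFrame_succ (k : Fin 3) :
    tiltedFrame e₀ e φ k.succ = cos (φ k) • e₀ + sin (φ k) • e k := rfl

theorem tiltedFrame_mem_span (a : Fin 4) :
    tiltedFrame e₀ e φ a ∈ Submodule.span ℝ (insert e₀ (Set.range e)) := by
  have h₀ : e₀ ∈ Submodule.span ℝ (insert e₀ (Set.range e)) :=
    Submodule.subset_span (Set.mem_insert _ _)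
  induction a using Fin.cases with
  | zero => exact h₀
  | succ k =>
    exact Submodule.add_mem _ (Submodule.smul_mem _ _ h₀)
      (Submodule.smul_mem _ _ (Submodule.subset_span (Set.mem_insert_of_mem _ ⟨k, rfl⟩)))

theorem inner_tiltedFrame_zero_succ (he₀ : ‖e₀‖ = 1) (horth : ∀ i, ⟪e₀, e i⟫ = 0)
    (k : Fin 3) :
    ⟪tiltedFrame e₀ e φ 0, tiltedFrame e₀ e φ k.succ⟫ = cos (φ k) := by
  simp [inner_add_right, real_inner_smul_right, horth, he₀]

theorem inner_tiltedFrame_succ_succ (he₀ : ‖e₀‖ = 1) (horth : ∀ i, ⟪e₀, e i⟫ = 0)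
    (j k : Fin 3) :
    ⟪tiltedFrame e₀ e φ j.succ, tiltedFrame e₀ e φ k.succ⟫ =
      cos (φ j) * cos (φ k) + sin (φ j) * sin (φ k) * ⟪e j, e k⟫ := by
  simp only [tiltedFrame_succ, inner_add_left, inner_add_right, real_inner_smul_left,
    real_inner_smul_right, horth, real_inner_comm e₀ (e _), real_inner_self_eq_norm_sq, he₀]
  ring

theorem norm_tiltedFrame (he₀ : ‖e₀‖ = 1) (he : ∀ i, ‖e i‖ = 1) (horth : ∀ i, ⟪e₀, e i⟫ = 0)
    (a : Fin 4) : ‖tiltedFrame e₀ e φ a‖ = 1 := by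
  induction a using Fin.cases with
  | zero => exact he₀
  | succ k =>
    have h := inner_tiltedFrame_succ_succ φ he₀ horth k k
    rw [real_inner_self_eq_norm_sq, real_inner_self_eq_norm_sq, he, one_pow, mul_one,
      ← sq, ← sq, cos_sq_add_sin_sq] at h
    exact (pow_eq_one_iff_of_nonneg (norm_nonneg _) two_ne_zero).1 h

end TiltedFrame

end Quaternionic

theorem stmt_19_general {V : Type*}
    [NormedAddCommGroup V] [InnerProductSpace ℝ V] [FiniteDimensional ℝ V]
    (J : Fin 3 → V →ₗ[ℝ] V)
    (hJorth : ∀ i, ∀ x y : V, (⟪J i x, J i y⟫ : ℝ) = ⟪x, y⟫)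
    (hJsq : ∀ i, ∀ x : V, J i (J i x) = -x)
    (hJmul : ∀ i : Fin 3, ∀ x : V, J i (J (i + 1) x) = J (i + 2) x)
    (hJanti : ∀ i : Fin 3, ∀ x : V, J (i + 1) (J i x) = -J (i + 2) x)
    (φ : Fin 3 → ℝ)
    (hφ0 : 0 < φ 0) (hφ01 : φ 0 ≤ φ 1) (hφ12 : φ 1 ≤ φ 2) (hφ2 : φ 2 < π / 2)
    (e₀ : V) (e : Fin 3 → V)
    (he₀ : ‖e₀‖ = 1) (he : ∀ i, ‖e i‖ = 1)
    (htotreal : ∀ j : Fin 3,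
      (⟪J j e₀, e₀⟫ : ℝ) = 0 ∧ (∀ k, (⟪J j e₀, e k⟫ : ℝ) = 0) ∧
      (∀ k, (⟪J j (e k), e₀⟫ : ℝ) = 0) ∧ (∀ k l, (⟪J j (e k), e l⟫ : ℝ) = 0))
    (horth : ∀ i, (⟪e₀, e i⟫ : ℝ) = 0)
    (hinner : ∀ i : Fin 3, (⟪e i, e (i + 1)⟫ : ℝ)
      = (Real.cos (φ (i + 2)) - Real.cos (φ i) * Real.cos (φ (i + 1)))
        / (Real.sin (φ i) * Real.sin (φ (i + 1))))
    (ξ : Fin 4 → V) (hξ0 : ξ 0 = e₀)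
    (hξ : ∀ k : Fin 3,
      ξ k.succ = Real.cos (φ k) • J k e₀ + Real.sin (φ k) • J k (e k))
    (W : Submodule ℝ V) (hWdef : W = Submodule.span ℝ (Set.range ξ))
    (Fb : Fin 3 → V → V)
    (hFb : ∀ (i : Fin 3) (x : V),
      Fb i x = (Real.cos (φ i))⁻¹ • ((W.orthogonalProjectionOnto) (J i x) : V)) :
    ∀ i : Fin 3, ∀ x ∈ W,
      Fb i (Fb (i + 1) x) = Fb (i + 2) x ∧
      Fb (i + 1) (Fb i x) = -(Fb (i + 2) x) ∧
      Fb i (Fb i x) = -x := by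
  have hφ : ∀ i, 0 < φ i ∧ φ i < π / 2 := by
    intro i
    rcases (by decide : ∀ i : Fin 3, i = 0 ∨ i = 1 ∨ i = 2) i with rfl | rfl | rfl <;>
      constructor <;> linarith
  have hU : IsTotallyReal J (Submodule.span ℝ (insert e₀ (Set.range e))) := by
    refine isTotallyReal_span fun j => ?_
    rintro _ (rfl | ⟨k, rfl⟩) _ (rfl | ⟨l, rfl⟩)
    exacts [(htotreal j).1, (htotreal j).2.1 l, (htotreal j).2.2.1 k, (htotreal j).2.2.2 k l]
  have hξu : ∀ a, ξ a = quatUnit J a (tiltedFrame e₀ e φ a) := by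
    intro a
    induction a using Fin.cases with
    | zero => exact hξ0
    | succ k => simp [hξ]
  have hsin : ∀ i, sin (φ i) ≠ 0 := fun i =>
    (sin_pos_of_pos_of_lt_pi (hφ i).1 (by linarith [(hφ i).2, pi_pos])).ne'
  have hc1 : ∀ i : Fin 3, ⟪tiltedFrame e₀ e φ (i + 1).succ, tiltedFrame e₀ e φ (i + 2).succ⟫
      = cos (φ i) := by
    intro i
    have h := hinner (i + 1)
    rw [fin_three_add_one_add_one, fin_three_add_one_add_two] at h
    rw [inner_tiltedFrame_succ_succ φ he₀ horth, h]
    field_simp [hsin]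
    ring
  subst hWdef
  intro i x hx
  exact quaternionic_relations_of_frame ⟨hJorth, hJsq, hJmul, hJanti⟩ hU
    (tiltedFrame_mem_span φ) (norm_tiltedFrame φ he₀ he horth) hξu (fun i => cos (φ i))
    (fun i => (cos_pos_of_mem_Ioo ⟨by linarith [(hφ i).1, pi_pos], (hφ i).2⟩).ne')
    (inner_tiltedFrame_zero_succ φ he₀ horth) hc1 Fb hFb i hx

/-- On `w⊥ = span{ξ₀,ξ₁,ξ₂,ξ₃}` (constant quaternionic Kähler angle
`(φ₁,φ₂,φ₃)` with `φ₃ < π/2`), the maps `F̄_i = cos(φ_i)⁻¹ F_i` satisfy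
`F̄_i F̄_{i+1} = F̄_{i+2} = -F̄_{i+1} F̄_i` and `F̄_i² = -id`, i.e. they form a
quaternionic structure on `w⊥`. -/
theorem stmt_19 {V : Type*}
    [NormedAddCommGroup V] [InnerProductSpace ℝ V] [FiniteDimensional ℝ V]
    (J : Fin 3 → V →ₗ[ℝ] V)
    (hJorth : ∀ i, ∀ x y : V, (⟪J i x, J i y⟫ : ℝ) = ⟪x, y⟫)
    (hJsq : ∀ i, ∀ x : V, J i (J i x) = -x)
    (hJmul : ∀ i : Fin 3, ∀ x : V, J i (J (i + 1) x) = J (i + 2) x)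
    (hJanti : ∀ i : Fin 3, ∀ x : V, J (i + 1) (J i x) = -J (i + 2) x)
    (φ : Fin 3 → ℝ)
    (hφ0 : 0 < φ 0) (hφ01 : φ 0 ≤ φ 1) (hφ12 : φ 1 ≤ φ 2) (hφ2 : φ 2 < π / 2)
    (hφsum : Real.cos (φ 0) + Real.cos (φ 1) < 1 + Real.cos (φ 2))
    (e₀ : V) (e : Fin 3 → V)
    (he₀ : ‖e₀‖ = 1) (he : ∀ i, ‖e i‖ = 1)
    (htotreal : ∀ j : Fin 3,
      (⟪J j e₀, e₀⟫ : ℝ) = 0 ∧ (∀ k, (⟪J j e₀, e k⟫ : ℝ) = 0) ∧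
      (∀ k, (⟪J j (e k), e₀⟫ : ℝ) = 0) ∧ (∀ k l, (⟪J j (e k), e l⟫ : ℝ) = 0))
    (horth : ∀ i, (⟪e₀, e i⟫ : ℝ) = 0)
    (hinner : ∀ i : Fin 3, (⟪e i, e (i + 1)⟫ : ℝ)
      = (Real.cos (φ (i + 2)) - Real.cos (φ i) * Real.cos (φ (i + 1)))
        / (Real.sin (φ i) * Real.sin (φ (i + 1))))
    (ξ : Fin 4 → V) (hξ0 : ξ 0 = e₀)
    (hξ : ∀ k : Fin 3,
      ξ k.succ = Real.cos (φ k) • J k e₀ + Real.sin (φ k) • J k (e k))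
    (W : Submodule ℝ V) (hWdef : W = Submodule.span ℝ (Set.range ξ))
    (Fb : Fin 3 → V → V)
    (hFb : ∀ (i : Fin 3) (x : V),
      Fb i x = (Real.cos (φ i))⁻¹ • ((W.orthogonalProjectionOnto) (J i x) : V)) :
    ∀ i : Fin 3, ∀ x ∈ W,
      Fb i (Fb (i + 1) x) = Fb (i + 2) x ∧
      Fb (i + 1) (Fb i x) = -(Fb (i + 2) x) ∧
      Fb i (Fb i x) = -x :=
  stmt_19_general J hJorth hJsq hJmul hJanti φ hφ0 hφ01 hφ12 hφ2 e₀ e he₀ he htotreal horth hinner ξ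
    hξ0 hξ W hWdef Fb hFb
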